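/- arXiv:1505.06051 — 8 statements merged into one kernel-verified Lean document; each statement's English description precedes it below -/
import Mathlib

section
/- The linear map S : D(H;G) → D(H;G) defined by S(h,g) = (g⁻¹h⁻¹g, g⁻¹) is an antipode for D(H;G), i.e. ∑ S(a₍₁₎)a₍₂₎ = ε(a)1 = ∑ a₍₁₎S(a₍₂₎) for all a ∈ D(H;G), and S² = id. -/
open scoped BigOperators

noncomputable section

variable {G : Type*} [Group G] [Fintype G] [DecidableEq G]

/-- For a normal subgroup `H` of `G`, the conjugate `g⁻¹ h g` as an element of `H`. -/
def conjH (H : Subgroup G) [H.Normal] (g : G) (h : H) : H :=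
  ⟨g⁻¹ * (h : G) * g, by
    simpa using Subgroup.Normal.conj_mem ‹H.Normal› (h : G) h.2 g⁻¹⟩

/-- The multiplication of `D(H;G)`, modelled on coefficient functions `H × G → ℂ`:
`(h₁,g₁)(h₂,g₂) = δ_{h₁g₁, g₁h₂} (h₁, g₁g₂)`. -/
def Dmul (H : Subgroup G) [H.Normal] (a b : H × G → ℂ) : H × G → ℂ :=
  fun p => ∑ g₁ : G, a (p.1, g₁) * b (conjH H g₁ p.1, g₁⁻¹ * p.2)

/-- The basis element `(h,g)` of `D(H;G)`. -/
def bas (H : Subgroup G) (h : H) (g : G) : H × G → ℂ :=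
  fun p => if p = (h, g) then 1 else 0

/-- The unit `∑_{h ∈ H} (h, e)` of `D(H;G)`. -/
def Done (H : Subgroup G) [Fintype H] : H × G → ℂ :=
  ∑ h : H, bas H h 1

/-- The counit `ε(h,g) = δ_{h,e}` extended linearly. -/
def Dcounit (H : Subgroup G) (a : H × G → ℂ) : ℂ := ∑ g : G, a (1, g)

/-- The coproduct `Δ(h,g) = ∑_{t ∈ H} (t,g) ⊗ (t⁻¹h, g)`, on coefficient functions:
`D(H;G) ⊗ D(H;G)` is modelled as `(H × G) × (H × G) → ℂ`. -/
def Dcomul (H : Subgroup G) (a : H × G → ℂ) : (H × G) × (H × G) → ℂ :=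
  fun p => if p.1.2 = p.2.2 then a (p.1.1 * p.2.1, p.1.2) else 0

/-- The antipode on basis elements: `S(h,g) = (g⁻¹h⁻¹g, g⁻¹)` (an involution of the basis). -/
def Sbasis (H : Subgroup G) [H.Normal] : H × G → H × G :=
  fun p => (conjH H p.2 p.1⁻¹, p.2⁻¹)

/-- The antipode `S` extended linearly (as pullback along the basis involution). -/
def Dantipode (H : Subgroup G) [H.Normal] (a : H × G → ℂ) : H × G → ℂ :=
  fun p => a (Sbasis H p)

/-!
The coproduct pairs only basis elements with the same `G`-component, so in both convolution
sums the term indexed by `g₁` survives only when `g₁⁻¹ = g₁⁻¹ g` (resp. `g₁ = g⁻¹ g₁`), i.e.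
`g = 1`. The `H`-components then multiply to `1` because conjugation is a homomorphism, and the
remaining sum over `g₁` is the counit. `S² = id` holds because `S` is the pullback along an
involution of the basis.
-/

section conjH

variable (H : Subgroup G) [H.Normal]

omit [Fintype G] [DecidableEq G] in
lemma conjH_inv (g : G) (h : H) : conjH H g h⁻¹ = (conjH H g h)⁻¹ :=
  Subtype.ext (by simp [conjH]; group)

omit [Fintype G] [DecidableEq G] in
lemma conjH_inv_conjH (g : G) (h : H) : conjH H g⁻¹ (conjH H g h) = h :=
  Subtype.ext (by simp [conjH]; group)

omit [Fintype G] [DecidableEq G] in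
lemma Sbasis_involutive : Function.Involutive (Sbasis H) := by
  rintro ⟨h, g⟩
  simp [Sbasis, ← conjH_inv, conjH_inv_conjH]

end conjH

lemma Dcounit_smul_Done_apply (H : Subgroup G) [Fintype H] (a : H × G → ℂ) (h : H) (g : G) :
    (Dcounit H a • Done H) (h, g) = if g = 1 then Dcounit H a else 0 := by
  by_cases hg : g = 1 <;> simp [Done, bas, Finset.sum_apply, hg]

/-- `S(h,g) = (g⁻¹h⁻¹g,g⁻¹)` is an antipode:
`m∘(S⊗id)∘Δ = ε(·)1 = m∘(id⊗S)∘Δ`, and `S² = id`. -/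
theorem statement4 (H : Subgroup G) [H.Normal] [Fintype H] :
    (∀ a : H × G → ℂ,
      (fun p : H × G =>
          ∑ g₁ : G, Dcomul H a (Sbasis H (p.1, g₁), (conjH H g₁ p.1, g₁⁻¹ * p.2)))
        = Dcounit H a • Done H) ∧
    (∀ a : H × G → ℂ,
      (fun p : H × G =>
          ∑ g₁ : G, Dcomul H a ((p.1, g₁), Sbasis H (conjH H g₁ p.1, g₁⁻¹ * p.2)))
        = Dcounit H a • Done H) ∧
    (∀ a : H × G → ℂ, Dantipode H (Dantipode H a) = a) := by
  refine ⟨fun a => funext fun ⟨h, g⟩ => ?_, fun a => funext fun ⟨h, g⟩ => ?_,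
    fun a => funext fun p => congrArg a (Sbasis_involutive H p)⟩
  · rw [Dcounit_smul_Done_apply]
    by_cases hg : g = 1
    · subst hg
      simpa [Dcomul, Sbasis, Dcounit, conjH_inv] using
        Equiv.sum_comp (Equiv.inv G) (fun g => a (1, g))
    · simp [Dcomul, Sbasis, hg]
  · rw [Dcounit_smul_Done_apply]
    by_cases hg : g = 1
    · subst hg
      simp [Dcomul, Sbasis, Dcounit, ← conjH_inv, conjH_inv_conjH]
    · simp [Dcomul, Sbasis, hg]
end
end

section
/- The element z = (1/|G|) ∑_{g∈G} (e,g) of D(H;G) satisfies az = za = ε(a)z for all a ∈ D(H;G); that is, z is a two-sided integral. -/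
/-!
`z` is supported on `{e} × G`, where it is constant, and conjugation by `g` fixes only `e`.
Hence in `a z` only the coefficients `a(e,g)` survive, each contributing `z`, while in `z a`
the surviving coefficients are `a(e, g⁻¹x)`, whose sum over `g` is `ε(a)` for every `x`.
-/

open scoped BigOperators

noncomputable section

variable {G : Type*} [Group G] [Fintype G] [DecidableEq G]

/-- The element `z = (1/|G|) ∑_{g∈G} (e,g)` of `D(H;G)`. -/
def Dint (H : Subgroup G) : H × G → ℂ :=
  fun p => if p.1 = 1 then (Fintype.card G : ℂ)⁻¹ else 0

/-- `Dint H` is supported on `{1} × G`. -/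
lemma Dint_mul_eq_Dint_mul_one (H : Subgroup G) (f : H → ℂ) (p : H × G) :
    Dint H p * f p.1 = Dint H p * f 1 := by
  unfold Dint
  split_ifs with hp <;> simp [hp]

omit [DecidableEq G] in
lemma Dcounit_eq_sum_inv_mul (H : Subgroup G) (a : H × G → ℂ) (x : G) :
    Dcounit H a = ∑ g : G, a (1, g⁻¹ * x) :=
  (Fintype.sum_equiv ((Equiv.inv G).trans (Equiv.mulRight x)) _ _ fun _ => rfl).symm

section

variable (H : Subgroup G) [H.Normal]

omit [Fintype G] [DecidableEq G] in
@[simp]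
lemma conjH_eq_one_iff {g : G} {h : H} : conjH H g h = 1 ↔ h = 1 := by
  rw [← Subtype.coe_inj, ← Subtype.coe_inj]
  simp [conjH, mul_assoc, mul_eq_one_iff_eq_inv]

lemma Dint_conjH (g x y : G) (h : H) : Dint H (conjH H g h, x) = Dint H (h, y) := by
  simp [Dint]

lemma Dmul_Dint (a : H × G → ℂ) : Dmul H a (Dint H) = Dcounit H a • Dint H := by
  funext p
  calc Dmul H a (Dint H) p = Dint H p * ∑ g : G, a (p.1, g) := by
        simp only [Dmul, Dint_conjH H _ _ p.2, Finset.mul_sum]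
        exact Finset.sum_congr rfl fun _ _ => mul_comm _ _
    _ = Dint H p * Dcounit H a := Dint_mul_eq_Dint_mul_one H (fun h => ∑ g, a (h, g)) p
    _ = (Dcounit H a • Dint H) p := mul_comm _ _

lemma Dint_Dmul (a : H × G → ℂ) : Dmul H (Dint H) a = Dcounit H a • Dint H := by
  funext p
  calc Dmul H (Dint H) a p = Dint H p * ∑ g : G, a (conjH H g p.1, g⁻¹ * p.2) := by
        simp only [Dmul, Finset.mul_sum]
        rfl
    _ = Dint H p * ∑ g : G, a (conjH H g 1, g⁻¹ * p.2) :=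
        Dint_mul_eq_Dint_mul_one H (fun h => ∑ g, a (conjH H g h, g⁻¹ * p.2)) p
    _ = (Dcounit H a • Dint H) p := by
        simp only [(conjH_eq_one_iff H).2 rfl, ← Dcounit_eq_sum_inv_mul]
        exact mul_comm _ _

end

/-- `z = (1/|G|)∑_g (e,g)` satisfies `az = za = ε(a)z` for all `a`,
i.e. `z` is a two-sided integral. -/
theorem statement5 (H : Subgroup G) [H.Normal] :
    ∀ a : H × G → ℂ,
      Dmul H a (Dint H) = Dcounit H a • Dint H ∧
      Dmul H (Dint H) a = Dcounit H a • Dint H :=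
  fun a => ⟨Dmul_Dint H a, Dint_Dmul H a⟩
end
end

section
/- Under the hexagon condition on twisting maps R₁, R₂, R₃, the two iterated twisted tensor products A ⊗_{T₂} (B ⊗_{R₂} C) and (A ⊗_{R₁} B) ⊗_{T₁} C have equal multiplications (where T₁ = (id_A⊗R₂)∘(R₃⊗id_B) and T₂ = (R₁⊗id_C)∘(id_B⊗R₃)), so the iterated twisted tensor product A ⊗_{R₁} B ⊗_{R₂} C is well defined and associative. -/
open TensorProduct

noncomputable section

/-- First twisting condition: `R∘(id_Y ⊗ m_X) = (m_X ⊗ id_Y)∘(id_X ⊗ R)∘(R ⊗ id_X)`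
(with the canonical associators inserted). -/
def TwistCond1 {X Y : Type*} [AddCommGroup X] [Module ℂ X] [AddCommGroup Y] [Module ℂ Y]
    (mX : X ⊗[ℂ] X →ₗ[ℂ] X) (R : Y ⊗[ℂ] X →ₗ[ℂ] X ⊗[ℂ] Y) : Prop :=
  R ∘ₗ TensorProduct.map LinearMap.id mX
    = TensorProduct.map mX LinearMap.id
        ∘ₗ (TensorProduct.assoc ℂ X X Y).symm.toLinearMap
        ∘ₗ TensorProduct.map LinearMap.id R
        ∘ₗ (TensorProduct.assoc ℂ X Y X).toLinearMap
        ∘ₗ TensorProduct.map R LinearMap.id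
        ∘ₗ (TensorProduct.assoc ℂ Y X X).symm.toLinearMap

/-- Second twisting condition: `R∘(m_Y ⊗ id_X) = (id_X ⊗ m_Y)∘(R ⊗ id_Y)∘(id_Y ⊗ R)`
(with the canonical associators inserted). -/
def TwistCond2 {X Y : Type*} [AddCommGroup X] [Module ℂ X] [AddCommGroup Y] [Module ℂ Y]
    (mY : Y ⊗[ℂ] Y →ₗ[ℂ] Y) (R : Y ⊗[ℂ] X →ₗ[ℂ] X ⊗[ℂ] Y) : Prop :=
  R ∘ₗ TensorProduct.map mY LinearMap.id
    = TensorProduct.map LinearMap.id mY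
        ∘ₗ (TensorProduct.assoc ℂ X Y Y).toLinearMap
        ∘ₗ TensorProduct.map R LinearMap.id
        ∘ₗ (TensorProduct.assoc ℂ Y X Y).symm.toLinearMap
        ∘ₗ TensorProduct.map LinearMap.id R
        ∘ₗ (TensorProduct.assoc ℂ Y Y X).toLinearMap

/-- The twisted multiplication `m_R = (m_X ⊗ m_Y)∘(id_X ⊗ R ⊗ id_Y)` on `X ⊗ Y`. -/
def twistMul {X Y : Type*} [AddCommGroup X] [Module ℂ X] [AddCommGroup Y] [Module ℂ Y]
    (mX : X ⊗[ℂ] X →ₗ[ℂ] X) (mY : Y ⊗[ℂ] Y →ₗ[ℂ] Y) (R : Y ⊗[ℂ] X →ₗ[ℂ] X ⊗[ℂ] Y) :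
    (X ⊗[ℂ] Y) ⊗[ℂ] (X ⊗[ℂ] Y) →ₗ[ℂ] X ⊗[ℂ] Y :=
  TensorProduct.map mX mY
    ∘ₗ (TensorProduct.assoc ℂ X X (Y ⊗[ℂ] Y)).symm.toLinearMap
    ∘ₗ TensorProduct.map LinearMap.id
        ((TensorProduct.assoc ℂ X Y Y).toLinearMap
          ∘ₗ TensorProduct.map R LinearMap.id
          ∘ₗ (TensorProduct.assoc ℂ Y X Y).symm.toLinearMap)
    ∘ₗ (TensorProduct.assoc ℂ X Y (X ⊗[ℂ] Y)).toLinearMap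

/-- The hexagon (compatibility) equation for `R₁ : B⊗A→A⊗B`, `R₂ : C⊗B→B⊗C`,
`R₃ : C⊗A→A⊗C`:
`(id_A⊗R₂)∘(R₃⊗id_B)∘(id_C⊗R₁) = (R₁⊗id_C)∘(id_B⊗R₃)∘(R₂⊗id_A)`. -/
def Hexagon {A B C : Type*} [AddCommGroup A] [Module ℂ A] [AddCommGroup B] [Module ℂ B]
    [AddCommGroup C] [Module ℂ C]
    (R₁ : B ⊗[ℂ] A →ₗ[ℂ] A ⊗[ℂ] B) (R₂ : C ⊗[ℂ] B →ₗ[ℂ] B ⊗[ℂ] C)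
    (R₃ : C ⊗[ℂ] A →ₗ[ℂ] A ⊗[ℂ] C) : Prop :=
  TensorProduct.map LinearMap.id R₂
      ∘ₗ (TensorProduct.assoc ℂ A C B).toLinearMap
      ∘ₗ TensorProduct.map R₃ LinearMap.id
      ∘ₗ (TensorProduct.assoc ℂ C A B).symm.toLinearMap
      ∘ₗ TensorProduct.map LinearMap.id R₁
    = (TensorProduct.assoc ℂ A B C).toLinearMap
        ∘ₗ TensorProduct.map R₁ LinearMap.id
        ∘ₗ (TensorProduct.assoc ℂ B A C).symm.toLinearMap
        ∘ₗ TensorProduct.map LinearMap.id R₃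
        ∘ₗ (TensorProduct.assoc ℂ B C A).toLinearMap
        ∘ₗ TensorProduct.map R₂ LinearMap.id
        ∘ₗ (TensorProduct.assoc ℂ C B A).symm.toLinearMap

/-- The map `T₁ = (id_A⊗R₂)∘(R₃⊗id_B) : C ⊗ (A⊗B) → (A⊗B) ⊗ C`. -/
def Tone {A B C : Type*} [AddCommGroup A] [Module ℂ A] [AddCommGroup B] [Module ℂ B]
    [AddCommGroup C] [Module ℂ C]
    (R₂ : C ⊗[ℂ] B →ₗ[ℂ] B ⊗[ℂ] C) (R₃ : C ⊗[ℂ] A →ₗ[ℂ] A ⊗[ℂ] C) :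
    C ⊗[ℂ] (A ⊗[ℂ] B) →ₗ[ℂ] (A ⊗[ℂ] B) ⊗[ℂ] C :=
  (TensorProduct.assoc ℂ A B C).symm.toLinearMap
    ∘ₗ TensorProduct.map LinearMap.id R₂
    ∘ₗ (TensorProduct.assoc ℂ A C B).toLinearMap
    ∘ₗ TensorProduct.map R₃ LinearMap.id
    ∘ₗ (TensorProduct.assoc ℂ C A B).symm.toLinearMap

/-- The map `T₂ = (R₁⊗id_C)∘(id_B⊗R₃) : (B⊗C) ⊗ A → A ⊗ (B⊗C)`. -/
def Ttwo {A B C : Type*} [AddCommGroup A] [Module ℂ A] [AddCommGroup B] [Module ℂ B]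
    [AddCommGroup C] [Module ℂ C]
    (R₁ : B ⊗[ℂ] A →ₗ[ℂ] A ⊗[ℂ] B) (R₃ : C ⊗[ℂ] A →ₗ[ℂ] A ⊗[ℂ] C) :
    (B ⊗[ℂ] C) ⊗[ℂ] A →ₗ[ℂ] A ⊗[ℂ] (B ⊗[ℂ] C) :=
  (TensorProduct.assoc ℂ A B C).toLinearMap
    ∘ₗ TensorProduct.map R₁ LinearMap.id
    ∘ₗ (TensorProduct.assoc ℂ B A C).symm.toLinearMap
    ∘ₗ TensorProduct.map LinearMap.id R₃
    ∘ₗ (TensorProduct.assoc ℂ B C A).toLinearMap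

section General
variable {X Y : Type*} [AddCommGroup X] [Module ℂ X] [AddCommGroup Y] [Module ℂ Y]

/-- associativity of a multiplication, as linear maps -/
def MulAssoc' (mX : X ⊗[ℂ] X →ₗ[ℂ] X) : Prop :=
  mX ∘ₗ TensorProduct.map mX LinearMap.id
    = mX ∘ₗ TensorProduct.map LinearMap.id mX ∘ₗ (TensorProduct.assoc ℂ X X X).toLinearMap

variable (mX : X ⊗[ℂ] X →ₗ[ℂ] X) (mY : Y ⊗[ℂ] Y →ₗ[ℂ] Y) (R : Y ⊗[ℂ] X →ₗ[ℂ] X ⊗[ℂ] Y)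

lemma twistMul_tmul (x₁ x₂ : X) (y₁ y₂ : Y) :
    twistMul mX mY R ((x₁ ⊗ₜ y₁) ⊗ₜ (x₂ ⊗ₜ y₂))
      = TensorProduct.map (mX ∘ₗ TensorProduct.mk ℂ X X x₁)
          (mY ∘ₗ (TensorProduct.mk ℂ Y Y).flip y₂) (R (y₁ ⊗ₜ x₂)) := by
  simp only [twistMul, LinearMap.comp_apply, LinearEquiv.coe_coe, assoc_tmul, map_tmul,
    LinearMap.id_coe, id_eq, assoc_symm_tmul]
  generalize R (y₁ ⊗ₜ[ℂ] x₂) = w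
  induction w using TensorProduct.induction_on with
  | zero => simp
  | tmul u v => simp [mk_apply]
  | add a b ha hb => simp [tmul_add, add_tmul, ha, hb]

lemma keyL (hX : MulAssoc' mX) (h2 : TwistCond2 mY R) (x₁ x₃ : X) (y₂ y₃ : Y) (t : X ⊗[ℂ] Y) :
    twistMul mX mY R
        ((TensorProduct.map (mX ∘ₗ TensorProduct.mk ℂ X X x₁)
            (mY ∘ₗ (TensorProduct.mk ℂ Y Y).flip y₂) t) ⊗ₜ (x₃ ⊗ₜ y₃))
      = TensorProduct.map (mX ∘ₗ TensorProduct.mk ℂ X X x₁)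
          (mY ∘ₗ (TensorProduct.mk ℂ Y Y).flip y₃)
          (twistMul mX mY R (t ⊗ₜ R (y₂ ⊗ₜ x₃))) := by
  induction t using TensorProduct.induction_on with
  | zero => simp
  | add a b ha hb => simp only [map_add, add_tmul, tmul_add]; rw [ha, hb]
  | tmul u v =>
    rw [map_tmul, twistMul_tmul]
    have h2' : R ((mY (v ⊗ₜ y₂)) ⊗ₜ x₃)
        = (TensorProduct.map LinearMap.id mY
            ∘ₗ (TensorProduct.assoc ℂ X Y Y).toLinearMap
            ∘ₗ TensorProduct.map R LinearMap.id
            ∘ₗ (TensorProduct.assoc ℂ Y X Y).symm.toLinearMap)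
          (v ⊗ₜ (R (y₂ ⊗ₜ x₃))) := by
      have := LinearMap.congr_fun h2 ((v ⊗ₜ y₂) ⊗ₜ x₃)
      simpa using this
    simp only [LinearMap.comp_apply, mk_apply, LinearMap.flip_apply] at h2' ⊢
    rw [h2']
    generalize R (y₂ ⊗ₜ[ℂ] x₃) = s
    induction s using TensorProduct.induction_on with
    | zero => simp
    | add a b ha hb => simp only [map_add, add_tmul, tmul_add]; rw [ha, hb]
    | tmul p q =>
      simp only [LinearEquiv.coe_coe, assoc_symm_tmul, map_tmul, LinearMap.id_coe, id_eq,
        LinearMap.comp_apply]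
      rw [twistMul_tmul]
      generalize R (v ⊗ₜ[ℂ] p) = w
      induction w using TensorProduct.induction_on with
      | zero => simp
      | add a b ha hb => simp only [map_add, add_tmul, tmul_add]; rw [ha, hb]
      | tmul m n =>
        simp only [assoc_tmul, map_tmul, LinearEquiv.coe_coe, LinearMap.id_coe, id_eq,
          LinearMap.comp_apply, mk_apply, LinearMap.flip_apply]
        have := LinearMap.congr_fun hX ((x₁ ⊗ₜ u) ⊗ₜ m)
        simp only [LinearMap.comp_apply, map_tmul, LinearMap.id_coe, id_eq,
          LinearEquiv.coe_coe, assoc_tmul] at this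
        rw [this]

lemma keyR (hY : MulAssoc' mY) (h1 : TwistCond1 mX R) (x₁ x₂ : X) (y₁ y₃ : Y) (s : X ⊗[ℂ] Y) :
    twistMul mX mY R
        ((x₁ ⊗ₜ y₁) ⊗ₜ (TensorProduct.map (mX ∘ₗ TensorProduct.mk ℂ X X x₂)
            (mY ∘ₗ (TensorProduct.mk ℂ Y Y).flip y₃) s))
      = TensorProduct.map (mX ∘ₗ TensorProduct.mk ℂ X X x₁)
          (mY ∘ₗ (TensorProduct.mk ℂ Y Y).flip y₃)
          (twistMul mX mY R (R (y₁ ⊗ₜ x₂) ⊗ₜ s)) := by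
  induction s using TensorProduct.induction_on with
  | zero => simp
  | add a b ha hb => simp only [map_add, add_tmul, tmul_add]; rw [ha, hb]
  | tmul p q =>
    rw [map_tmul, twistMul_tmul]
    have h1' : R (y₁ ⊗ₜ (mX (x₂ ⊗ₜ p)))
        = (TensorProduct.map mX LinearMap.id
            ∘ₗ (TensorProduct.assoc ℂ X X Y).symm.toLinearMap
            ∘ₗ TensorProduct.map LinearMap.id R
            ∘ₗ (TensorProduct.assoc ℂ X Y X).toLinearMap)
          ((R (y₁ ⊗ₜ x₂)) ⊗ₜ p) := by
      have := LinearMap.congr_fun h1 (y₁ ⊗ₜ (x₂ ⊗ₜ p))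
      simpa using this
    simp only [LinearMap.comp_apply, mk_apply, LinearMap.flip_apply] at h1' ⊢
    rw [h1']
    generalize R (y₁ ⊗ₜ[ℂ] x₂) = t
    induction t using TensorProduct.induction_on with
    | zero => simp
    | add a b ha hb => simp only [map_add, add_tmul, tmul_add]; rw [ha, hb]
    | tmul u v =>
      simp only [LinearEquiv.coe_coe, assoc_tmul, map_tmul, LinearMap.id_coe, id_eq,
        LinearMap.comp_apply]
      rw [twistMul_tmul]
      generalize R (v ⊗ₜ[ℂ] p) = w
      induction w using TensorProduct.induction_on with
      | zero => simp
      | add a b ha hb => simp only [map_add, add_tmul, tmul_add]; rw [ha, hb]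
      | tmul m n =>
        simp only [assoc_symm_tmul, map_tmul, LinearEquiv.coe_coe, LinearMap.id_coe, id_eq,
          LinearMap.comp_apply, mk_apply, LinearMap.flip_apply]
        have := LinearMap.congr_fun hY ((n ⊗ₜ q) ⊗ₜ y₃)
        simp only [LinearMap.comp_apply, map_tmul, LinearMap.id_coe, id_eq,
          LinearEquiv.coe_coe, assoc_tmul] at this
        rw [this]

lemma twistMul_assoc (hX : MulAssoc' mX) (hY : MulAssoc' mY)
    (h1 : TwistCond1 mX R) (h2 : TwistCond2 mY R) : MulAssoc' (twistMul mX mY R) := by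
  unfold MulAssoc'
  ext x₁ y₁ x₂ y₂ x₃ y₃
  simp only [LinearMap.comp_apply, map_tmul, LinearMap.id_coe, id_eq, LinearEquiv.coe_coe,
    assoc_tmul, AlgebraTensorModule.curry_apply, curry_apply, LinearMap.coe_restrictScalars]
  rw [twistMul_tmul mX mY R x₁ x₂ y₁ y₂, twistMul_tmul mX mY R x₂ x₃ y₂ y₃,
    keyL mX mY R hX h2, keyR mX mY R hY h1]


end General

section ABC
variable {A B C : Type*} [AddCommGroup A] [Module ℂ A] [AddCommGroup B] [Module ℂ B]
  [AddCommGroup C] [Module ℂ C]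
  (R₁ : B ⊗[ℂ] A →ₗ[ℂ] A ⊗[ℂ] B) (R₂ : C ⊗[ℂ] B →ₗ[ℂ] B ⊗[ℂ] C)
  (R₃ : C ⊗[ℂ] A →ₗ[ℂ] A ⊗[ℂ] C)
  (mA : A ⊗[ℂ] A →ₗ[ℂ] A) (mB : B ⊗[ℂ] B →ₗ[ℂ] B) (mC : C ⊗[ℂ] C →ₗ[ℂ] C)

def Kmap : C ⊗[ℂ] (B ⊗[ℂ] C) →ₗ[ℂ] B ⊗[ℂ] C :=
  TensorProduct.map LinearMap.id mC
    ∘ₗ (TensorProduct.assoc ℂ B C C).toLinearMap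
    ∘ₗ TensorProduct.map R₂ LinearMap.id
    ∘ₗ (TensorProduct.assoc ℂ C B C).symm.toLinearMap

def Lam : (A ⊗[ℂ] C) ⊗[ℂ] (B ⊗[ℂ] C) →ₗ[ℂ] (A ⊗[ℂ] B) ⊗[ℂ] C :=
  (TensorProduct.assoc ℂ A B C).symm.toLinearMap
    ∘ₗ TensorProduct.map LinearMap.id (Kmap R₂ mC)
    ∘ₗ (TensorProduct.assoc ℂ A C (B ⊗[ℂ] C)).toLinearMap

lemma h22' (h22 : TwistCond2 mC R₂) (c'' c' : C) (b : B) :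
    R₂ (mC (c'' ⊗ₜ c') ⊗ₜ b) = Kmap R₂ mC (c'' ⊗ₜ (R₂ (c' ⊗ₜ b))) := by
  have := LinearMap.congr_fun h22 ((c'' ⊗ₜ c') ⊗ₜ b)
  simpa [Kmap] using this

lemma lamL (h22 : TwistCond2 mC R₂) (c' : C) (b : B) :
    ((TensorProduct.assoc ℂ A B C).symm.toLinearMap
        ∘ₗ TensorProduct.map LinearMap.id R₂
        ∘ₗ (TensorProduct.assoc ℂ A C B).toLinearMap
        ∘ₗ (TensorProduct.mk ℂ (A ⊗[ℂ] C) B).flip b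
        ∘ₗ TensorProduct.map LinearMap.id mC
        ∘ₗ (TensorProduct.assoc ℂ A C C).toLinearMap
        ∘ₗ (TensorProduct.mk ℂ (A ⊗[ℂ] C) C).flip c')
      = Lam R₂ mC ∘ₗ (TensorProduct.mk ℂ (A ⊗[ℂ] C) (B ⊗[ℂ] C)).flip (R₂ (c' ⊗ₜ b)) := by
  ext a'' c''
  simp only [LinearMap.comp_apply, LinearMap.flip_apply, mk_apply, LinearEquiv.coe_coe,
    assoc_tmul, map_tmul, LinearMap.id_coe, id_eq, AlgebraTensorModule.curry_apply,
    curry_apply, LinearMap.coe_restrictScalars, Lam]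
  rw [h22' R₂ mC h22]

lemma lamW (b' : B) (c₃ : C) :
    (TensorProduct.map LinearMap.id mC
        ∘ₗ (TensorProduct.assoc ℂ (A ⊗[ℂ] B) C C).toLinearMap
        ∘ₗ (TensorProduct.mk ℂ ((A ⊗[ℂ] B) ⊗[ℂ] C) C).flip c₃
        ∘ₗ (TensorProduct.assoc ℂ A B C).symm.toLinearMap
        ∘ₗ TensorProduct.map LinearMap.id R₂
        ∘ₗ (TensorProduct.assoc ℂ A C B).toLinearMap
        ∘ₗ (TensorProduct.mk ℂ (A ⊗[ℂ] C) B).flip b')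
      = Lam R₂ mC ∘ₗ (TensorProduct.mk ℂ (A ⊗[ℂ] C) (B ⊗[ℂ] C)).flip (b' ⊗ₜ c₃) := by
  ext a'' c''
  simp only [LinearMap.comp_apply, LinearMap.flip_apply, mk_apply, LinearEquiv.coe_coe,
    assoc_tmul, map_tmul, LinearMap.id_coe, id_eq, AlgebraTensorModule.curry_apply,
    curry_apply, LinearMap.coe_restrictScalars, Lam, Kmap, assoc_symm_tmul]
  generalize R₂ (c'' ⊗ₜ[ℂ] b') = v
  induction v using TensorProduct.induction_on with
  | zero => simp
  | add a b ha hb => simp only [map_add, add_tmul, tmul_add]; rw [ha, hb]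
  | tmul b'' c₄ => simp

lemma lamR (c₁ : C) (a' : A) :
    (TensorProduct.map LinearMap.id mC
        ∘ₗ (TensorProduct.assoc ℂ (A ⊗[ℂ] B) C C).toLinearMap
        ∘ₗ TensorProduct.map (Tone R₂ R₃) LinearMap.id
        ∘ₗ (TensorProduct.assoc ℂ C (A ⊗[ℂ] B) C).symm.toLinearMap
        ∘ₗ TensorProduct.mk ℂ C ((A ⊗[ℂ] B) ⊗[ℂ] C) c₁
        ∘ₗ (TensorProduct.assoc ℂ A B C).symm.toLinearMap
        ∘ₗ TensorProduct.mk ℂ A (B ⊗[ℂ] C) a')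
      = Lam R₂ mC ∘ₗ TensorProduct.mk ℂ (A ⊗[ℂ] C) (B ⊗[ℂ] C) (R₃ (c₁ ⊗ₜ a')) := by
  ext b' c₃
  simp only [LinearMap.comp_apply, mk_apply, LinearEquiv.coe_coe, assoc_symm_tmul,
    map_tmul, LinearMap.id_coe, id_eq, AlgebraTensorModule.curry_apply, curry_apply,
    LinearMap.coe_restrictScalars, Tone, assoc_tmul]
  have := LinearMap.congr_fun (lamW R₂ mC b' c₃) (R₃ (c₁ ⊗ₜ a'))
  simp only [LinearMap.comp_apply, LinearMap.flip_apply, mk_apply, LinearEquiv.coe_coe] at this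
  exact this

lemma cond2_Tone (h22 : TwistCond2 mC R₂) (h32 : TwistCond2 mC R₃) :
    TwistCond2 mC (Tone R₂ R₃) := by
  unfold TwistCond2
  ext c₁ c₂ a b
  simp only [LinearMap.comp_apply, map_tmul, LinearMap.id_coe, id_eq, LinearEquiv.coe_coe,
    assoc_tmul, assoc_symm_tmul, AlgebraTensorModule.curry_apply, curry_apply,
    LinearMap.coe_restrictScalars]
  -- unfold the Tone on the left and the inner Tone on the right
  conv_lhs => rw [Tone]
  simp only [LinearMap.comp_apply, LinearEquiv.coe_coe, assoc_symm_tmul, map_tmul,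
    LinearMap.id_coe, id_eq]
  have h32' : R₃ (mC (c₁ ⊗ₜ c₂) ⊗ₜ a)
      = (TensorProduct.map LinearMap.id mC
          ∘ₗ (TensorProduct.assoc ℂ A C C).toLinearMap
          ∘ₗ TensorProduct.map R₃ LinearMap.id
          ∘ₗ (TensorProduct.assoc ℂ C A C).symm.toLinearMap)
        (c₁ ⊗ₜ (R₃ (c₂ ⊗ₜ a))) := by
    have := LinearMap.congr_fun h32 ((c₁ ⊗ₜ c₂) ⊗ₜ a)
    simpa using this
  rw [h32']
  have hTone : Tone R₂ R₃ (c₂ ⊗ₜ (a ⊗ₜ b))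
      = ((TensorProduct.assoc ℂ A B C).symm.toLinearMap
          ∘ₗ TensorProduct.map LinearMap.id R₂
          ∘ₗ (TensorProduct.assoc ℂ A C B).toLinearMap)
        ((R₃ (c₂ ⊗ₜ a)) ⊗ₜ b) := by
    simp [Tone]
  rw [hTone]
  generalize R₃ (c₂ ⊗ₜ[ℂ] a) = r
  simp only [LinearMap.comp_apply, LinearEquiv.coe_coe]
  induction r using TensorProduct.induction_on with
  | zero => simp
  | add s t hs ht =>
      simp only [map_add, add_tmul, tmul_add, LinearMap.map_add, LinearEquiv.map_add]
      rw [hs, ht]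
  | tmul a' c' =>
      simp only [assoc_symm_tmul, map_tmul, LinearMap.id_coe, id_eq, assoc_tmul]
      -- LHS is now `bigmapL` applied to w₀ := R₃ (c₁ ⊗ₜ a')
      have e1 := LinearMap.congr_fun (lamL R₂ mC h22 c' b) (R₃ (c₁ ⊗ₜ a'))
      have e2 := LinearMap.congr_fun (lamR R₂ R₃ mC c₁ a') (R₂ (c' ⊗ₜ b))
      simp only [LinearMap.comp_apply, LinearMap.flip_apply, mk_apply,
        LinearEquiv.coe_coe] at e1 e2
      rw [e1, ← e2]


lemma tone_tmul (c : C) (u : A) (v : B) :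
    Tone R₂ R₃ (c ⊗ₜ (u ⊗ₜ v))
      = ((TensorProduct.assoc ℂ A B C).symm.toLinearMap
          ∘ₗ TensorProduct.map LinearMap.id R₂
          ∘ₗ (TensorProduct.assoc ℂ A C B).toLinearMap) ((R₃ (c ⊗ₜ u)) ⊗ₜ v) := by
  simp [Tone]

/-- the truncated hexagon `(id⊗R₂)∘(R₃⊗id)` (with associators) -/
def hexLp : C ⊗[ℂ] (A ⊗[ℂ] B) →ₗ[ℂ] A ⊗[ℂ] (B ⊗[ℂ] C) :=
  TensorProduct.map LinearMap.id R₂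
    ∘ₗ (TensorProduct.assoc ℂ A C B).toLinearMap
    ∘ₗ TensorProduct.map R₃ LinearMap.id
    ∘ₗ (TensorProduct.assoc ℂ C A B).symm.toLinearMap

def innerB (b2 : B) : B ⊗[ℂ] C →ₗ[ℂ] B ⊗[ℂ] C :=
  TensorProduct.map mB LinearMap.id
    ∘ₗ (TensorProduct.assoc ℂ B B C).symm.toLinearMap
    ∘ₗ TensorProduct.map LinearMap.id (R₂ ∘ₗ (TensorProduct.mk ℂ C B).flip b2)

def Omga (b2 : B) : (A ⊗[ℂ] C) ⊗[ℂ] (A ⊗[ℂ] B) →ₗ[ℂ] (A ⊗[ℂ] B) ⊗[ℂ] C :=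
  (TensorProduct.assoc ℂ A B C).symm.toLinearMap
    ∘ₗ TensorProduct.map mA (innerB R₂ mB b2)
    ∘ₗ (TensorProduct.assoc ℂ A A (B ⊗[ℂ] C)).symm.toLinearMap
    ∘ₗ TensorProduct.map LinearMap.id (hexLp R₂ R₃)
    ∘ₗ (TensorProduct.assoc ℂ A C (A ⊗[ℂ] B)).toLinearMap

def Blam (h : C ⊗[ℂ] (B ⊗[ℂ] A) →ₗ[ℂ] A ⊗[ℂ] (B ⊗[ℂ] C)) (b1 : B) (a2 : A) (b2 : B) :
    A ⊗[ℂ] C →ₗ[ℂ] (A ⊗[ℂ] B) ⊗[ℂ] C :=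
  (TensorProduct.assoc ℂ A B C).symm.toLinearMap
    ∘ₗ TensorProduct.map mA (innerB R₂ mB b2)
    ∘ₗ (TensorProduct.assoc ℂ A A (B ⊗[ℂ] C)).symm.toLinearMap
    ∘ₗ TensorProduct.map LinearMap.id
        (h ∘ₗ (TensorProduct.mk ℂ C (B ⊗[ℂ] A)).flip (b1 ⊗ₜ a2))

def Xi (aA : A) : (A ⊗[ℂ] B) ⊗[ℂ] (B ⊗[ℂ] C) →ₗ[ℂ] (A ⊗[ℂ] B) ⊗[ℂ] C :=
  (TensorProduct.assoc ℂ A B C).symm.toLinearMap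
    ∘ₗ TensorProduct.map (mA ∘ₗ TensorProduct.mk ℂ A A aA)
        (TensorProduct.map mB LinearMap.id ∘ₗ (TensorProduct.assoc ℂ B B C).symm.toLinearMap)
    ∘ₗ (TensorProduct.assoc ℂ A B (B ⊗[ℂ] C)).toLinearMap

lemma xiA (aA : A) (bT : B) (aT : A) :
    (TensorProduct.map (twistMul mA mB R₁) LinearMap.id
        ∘ₗ (TensorProduct.assoc ℂ (A ⊗[ℂ] B) (A ⊗[ℂ] B) C).symm.toLinearMap
        ∘ₗ TensorProduct.mk ℂ (A ⊗[ℂ] B) ((A ⊗[ℂ] B) ⊗[ℂ] C) (aA ⊗ₜ bT)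
        ∘ₗ (TensorProduct.assoc ℂ A B C).symm.toLinearMap
        ∘ₗ TensorProduct.mk ℂ A (B ⊗[ℂ] C) aT)
      = Xi mA mB aA ∘ₗ TensorProduct.mk ℂ (A ⊗[ℂ] B) (B ⊗[ℂ] C) (R₁ (bT ⊗ₜ aT)) := by
  ext bB cV
  simp only [LinearMap.comp_apply, mk_apply, LinearEquiv.coe_coe, assoc_symm_tmul,
    map_tmul, LinearMap.id_coe, id_eq, AlgebraTensorModule.curry_apply, curry_apply,
    LinearMap.coe_restrictScalars]
  rw [twistMul_tmul]
  generalize R₁ (bT ⊗ₜ[ℂ] aT) = t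
  induction t using TensorProduct.induction_on with
  | zero => simp
  | add a b ha hb => simp only [map_add, add_tmul, tmul_add]; rw [ha, hb]
  | tmul ax by_ => simp [Xi]

lemma xiB (aA : A) (c5 : C) (b2 : B) :
    ((TensorProduct.assoc ℂ A B C).symm.toLinearMap
        ∘ₗ TensorProduct.map mA (innerB R₂ mB b2)
        ∘ₗ (TensorProduct.assoc ℂ A A (B ⊗[ℂ] C)).symm.toLinearMap
        ∘ₗ TensorProduct.mk ℂ A (A ⊗[ℂ] (B ⊗[ℂ] C)) aA
        ∘ₗ (TensorProduct.assoc ℂ A B C).toLinearMap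
        ∘ₗ (TensorProduct.mk ℂ (A ⊗[ℂ] B) C).flip c5)
      = Xi mA mB aA ∘ₗ (TensorProduct.mk ℂ (A ⊗[ℂ] B) (B ⊗[ℂ] C)).flip (R₂ (c5 ⊗ₜ b2)) := by
  ext ax bx
  simp only [LinearMap.comp_apply, mk_apply, LinearMap.flip_apply, LinearEquiv.coe_coe,
    assoc_symm_tmul, assoc_tmul, map_tmul, LinearMap.id_coe, id_eq, innerB, Xi,
    AlgebraTensorModule.curry_apply, curry_apply, LinearMap.coe_restrictScalars]

lemma claimR (b1 : B) (a2 : A) (b2 : B) :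
    (TensorProduct.map (twistMul mA mB R₁) LinearMap.id
        ∘ₗ (TensorProduct.assoc ℂ (A ⊗[ℂ] B) (A ⊗[ℂ] B) C).symm.toLinearMap
        ∘ₗ TensorProduct.map LinearMap.id (Tone R₂ R₃)
        ∘ₗ (TensorProduct.assoc ℂ (A ⊗[ℂ] B) C (A ⊗[ℂ] B)).toLinearMap
        ∘ₗ (TensorProduct.mk ℂ ((A ⊗[ℂ] B) ⊗[ℂ] C) (A ⊗[ℂ] B)).flip (a2 ⊗ₜ b2)
        ∘ₗ (TensorProduct.assoc ℂ A B C).symm.toLinearMap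
        ∘ₗ TensorProduct.map LinearMap.id R₂
        ∘ₗ (TensorProduct.assoc ℂ A C B).toLinearMap
        ∘ₗ (TensorProduct.mk ℂ (A ⊗[ℂ] C) B).flip b1)
      = Blam R₂ mA mB
          ((TensorProduct.assoc ℂ A B C).toLinearMap
            ∘ₗ TensorProduct.map R₁ LinearMap.id
            ∘ₗ (TensorProduct.assoc ℂ B A C).symm.toLinearMap
            ∘ₗ TensorProduct.map LinearMap.id R₃
            ∘ₗ (TensorProduct.assoc ℂ B C A).toLinearMap
            ∘ₗ TensorProduct.map R₂ LinearMap.id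
            ∘ₗ (TensorProduct.assoc ℂ C B A).symm.toLinearMap) b1 a2 b2 := by
  ext aA cbar
  simp only [LinearMap.comp_apply, mk_apply, LinearMap.flip_apply, LinearEquiv.coe_coe,
    assoc_symm_tmul, assoc_tmul, map_tmul, LinearMap.id_coe, id_eq, Blam,
    AlgebraTensorModule.curry_apply, curry_apply, LinearMap.coe_restrictScalars]
  generalize R₂ (cbar ⊗ₜ[ℂ] b1) = z
  induction z using TensorProduct.induction_on with
  | zero => simp
  | add a b ha hb => simp only [map_add, add_tmul, tmul_add]; rw [ha, hb]
  | tmul bT c4 =>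
    simp only [assoc_symm_tmul, assoc_tmul, map_tmul, LinearMap.id_coe, id_eq,
      LinearEquiv.coe_coe]
    rw [tone_tmul]
    simp only [LinearMap.comp_apply, LinearEquiv.coe_coe, assoc_tmul, map_tmul,
      LinearMap.id_coe, id_eq]
    generalize R₃ (c4 ⊗ₜ[ℂ] a2) = w
    induction w using TensorProduct.induction_on with
    | zero => simp
    | add a b ha hb => simp only [map_add, add_tmul, tmul_add]; rw [ha, hb]
    | tmul aT c5 =>
      simp only [assoc_symm_tmul, assoc_tmul, map_tmul, LinearMap.id_coe, id_eq,
        LinearEquiv.coe_coe]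
      have e1 := LinearMap.congr_fun (xiA R₁ mA mB aA bT aT) (R₂ (c5 ⊗ₜ b2))
      have e2 := LinearMap.congr_fun (xiB R₂ mA mB aA c5 b2) (R₁ (bT ⊗ₜ aT))
      simp only [LinearMap.comp_apply, mk_apply, LinearMap.flip_apply,
        LinearEquiv.coe_coe] at e1 e2
      rw [e1, ← e2]

lemma claimL (h31 : TwistCond1 mA R₃) (h21 : TwistCond1 mB R₂)
    (c : C) (a1 : A) (b2 : B) (t : A ⊗[ℂ] B) :
    Tone R₂ R₃ (c ⊗ₜ (TensorProduct.map (mA ∘ₗ TensorProduct.mk ℂ A A a1)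
        (mB ∘ₗ (TensorProduct.mk ℂ B B).flip b2) t))
      = Omga R₂ R₃ mA mB b2 (R₃ (c ⊗ₜ a1) ⊗ₜ t) := by
  induction t using TensorProduct.induction_on with
  | zero => simp
  | add a b ha hb => simp only [map_add, add_tmul, tmul_add]; rw [ha, hb]
  | tmul ap bp =>
    rw [map_tmul]
    simp only [LinearMap.comp_apply, mk_apply, LinearMap.flip_apply]
    rw [tone_tmul]
    have h31' : R₃ (c ⊗ₜ (mA (a1 ⊗ₜ ap)))
        = (TensorProduct.map mA LinearMap.id
            ∘ₗ (TensorProduct.assoc ℂ A A C).symm.toLinearMap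
            ∘ₗ TensorProduct.map LinearMap.id R₃
            ∘ₗ (TensorProduct.assoc ℂ A C A).toLinearMap)
          ((R₃ (c ⊗ₜ a1)) ⊗ₜ ap) := by
      have := LinearMap.congr_fun h31 (c ⊗ₜ (a1 ⊗ₜ ap))
      simpa using this
    rw [h31']
    generalize R₃ (c ⊗ₜ[ℂ] a1) = r
    simp only [LinearMap.comp_apply, LinearEquiv.coe_coe]
    induction r using TensorProduct.induction_on with
    | zero => simp
    | add a b ha hb => simp only [map_add, add_tmul, tmul_add, LinearMap.map_add]; rw [ha, hb]
    | tmul aA cbar =>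
      simp only [assoc_tmul, map_tmul, LinearMap.id_coe, id_eq, LinearEquiv.coe_coe, Omga,
        LinearMap.comp_apply, hexLp, assoc_symm_tmul]
      generalize R₃ (cbar ⊗ₜ[ℂ] ap) = w
      induction w using TensorProduct.induction_on with
      | zero => simp
      | add a b ha hb => simp only [map_add, add_tmul, tmul_add]; rw [ha, hb]
      | tmul aP ct =>
        simp only [assoc_symm_tmul, assoc_tmul, map_tmul, LinearMap.id_coe, id_eq,
          LinearEquiv.coe_coe]
        have h21' : R₂ (ct ⊗ₜ (mB (bp ⊗ₜ b2)))
            = (TensorProduct.map mB LinearMap.id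
                ∘ₗ (TensorProduct.assoc ℂ B B C).symm.toLinearMap
                ∘ₗ TensorProduct.map LinearMap.id R₂
                ∘ₗ (TensorProduct.assoc ℂ B C B).toLinearMap)
              ((R₂ (ct ⊗ₜ bp)) ⊗ₜ b2) := by
          have := LinearMap.congr_fun h21 (ct ⊗ₜ (bp ⊗ₜ b2))
          simpa using this
        rw [h21']
        generalize R₂ (ct ⊗ₜ[ℂ] bp) = z
        simp only [LinearMap.comp_apply, LinearEquiv.coe_coe]
        induction z using TensorProduct.induction_on with
        | zero => simp
        | add a b ha hb =>
            simp only [map_add, add_tmul, tmul_add, LinearMap.map_add]; rw [ha, hb]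
        | tmul bP ch =>
            simp [innerB]

lemma bridgeL (b1 : B) (a2 : A) (b2 : B) :
    Blam R₂ mA mB
        (TensorProduct.map LinearMap.id R₂
          ∘ₗ (TensorProduct.assoc ℂ A C B).toLinearMap
          ∘ₗ TensorProduct.map R₃ LinearMap.id
          ∘ₗ (TensorProduct.assoc ℂ C A B).symm.toLinearMap
          ∘ₗ TensorProduct.map LinearMap.id R₁) b1 a2 b2
      = Omga R₂ R₃ mA mB b2
          ∘ₗ (TensorProduct.mk ℂ (A ⊗[ℂ] C) (A ⊗[ℂ] B)).flip (R₁ (b1 ⊗ₜ a2)) := by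
  ext aA cbar
  simp [Blam, Omga, hexLp]

lemma cond1_Tone (h31 : TwistCond1 mA R₃) (h21 : TwistCond1 mB R₂)
    (hhex : Hexagon R₁ R₂ R₃) :
    TwistCond1 (twistMul mA mB R₁) (Tone R₂ R₃) := by
  unfold TwistCond1
  ext c a1 b1 a2 b2
  simp only [LinearMap.comp_apply, map_tmul, LinearMap.id_coe, id_eq, LinearEquiv.coe_coe,
    assoc_tmul, assoc_symm_tmul, AlgebraTensorModule.curry_apply, curry_apply,
    LinearMap.coe_restrictScalars]
  rw [twistMul_tmul, claimL R₂ R₃ mA mB h31 h21, tone_tmul]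
  simp only [LinearMap.comp_apply, LinearEquiv.coe_coe]
  have e := LinearMap.congr_fun (claimR R₁ R₂ R₃ mA mB b1 a2 b2) (R₃ (c ⊗ₜ a1))
  simp only [LinearMap.comp_apply, mk_apply, LinearMap.flip_apply, LinearEquiv.coe_coe] at e
  rw [e, ← hhex]
  have e2 := LinearMap.congr_fun (bridgeL R₁ R₂ R₃ mA mB b1 a2 b2) (R₃ (c ⊗ₜ a1))
  simp only [LinearMap.comp_apply, mk_apply, LinearMap.flip_apply, LinearEquiv.coe_coe] at e2
  rw [e2]


lemma ttwo_tmul (b : B) (c : C) (a : A) :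
    Ttwo R₁ R₃ ((b ⊗ₜ c) ⊗ₜ a)
      = ((TensorProduct.assoc ℂ A B C).toLinearMap
          ∘ₗ TensorProduct.map R₁ LinearMap.id
          ∘ₗ (TensorProduct.assoc ℂ B A C).symm.toLinearMap) (b ⊗ₜ (R₃ (c ⊗ₜ a))) := by
  simp [Ttwo]

def Pimap (a1 : A) (c2 : C) : (A ⊗[ℂ] B) ⊗[ℂ] (B ⊗[ℂ] C) →ₗ[ℂ] A ⊗[ℂ] (B ⊗[ℂ] C) :=
  TensorProduct.map (mA ∘ₗ TensorProduct.mk ℂ A A a1)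
      (TensorProduct.map mB (mC ∘ₗ (TensorProduct.mk ℂ C C).flip c2)
        ∘ₗ (TensorProduct.assoc ℂ B B C).symm.toLinearMap)
    ∘ₗ (TensorProduct.assoc ℂ A B (B ⊗[ℂ] C)).toLinearMap

lemma p1La (a1 : A) (b2 : B) (c2 : C) (cp : C) :
    (TensorProduct.map (mA ∘ₗ TensorProduct.mk ℂ A A a1)
        ((twistMul mB mC R₂) ∘ₗ (TensorProduct.mk ℂ (B ⊗[ℂ] C) (B ⊗[ℂ] C)).flip (b2 ⊗ₜ c2))
        ∘ₗ (TensorProduct.assoc ℂ A B C).toLinearMap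
        ∘ₗ (TensorProduct.mk ℂ (A ⊗[ℂ] B) C).flip cp)
      = Pimap mA mB mC a1 c2
          ∘ₗ (TensorProduct.mk ℂ (A ⊗[ℂ] B) (B ⊗[ℂ] C)).flip (R₂ (cp ⊗ₜ b2)) := by
  ext ax bp
  simp only [LinearMap.comp_apply, mk_apply, LinearMap.flip_apply, LinearEquiv.coe_coe,
    assoc_tmul, map_tmul, LinearMap.id_coe, id_eq, AlgebraTensorModule.curry_apply,
    curry_apply, LinearMap.coe_restrictScalars]
  rw [twistMul_tmul]
  generalize R₂ (cp ⊗ₜ[ℂ] b2) = z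
  induction z using TensorProduct.induction_on with
  | zero => simp
  | add a b ha hb => simp only [map_add, add_tmul, tmul_add]; rw [ha, hb]
  | tmul bx cx => simp [Pimap]

lemma p1Lb (a1 : A) (b1 : B) (c2 : C) (ap : A) :
    ((TensorProduct.assoc ℂ A B C).toLinearMap
        ∘ₗ TensorProduct.map
            ((twistMul mA mB R₁) ∘ₗ TensorProduct.mk ℂ (A ⊗[ℂ] B) (A ⊗[ℂ] B) (a1 ⊗ₜ b1))
            (mC ∘ₗ (TensorProduct.mk ℂ C C).flip c2)
        ∘ₗ (TensorProduct.assoc ℂ A B C).symm.toLinearMap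
        ∘ₗ TensorProduct.mk ℂ A (B ⊗[ℂ] C) ap)
      = Pimap mA mB mC a1 c2
          ∘ₗ TensorProduct.mk ℂ (A ⊗[ℂ] B) (B ⊗[ℂ] C) (R₁ (b1 ⊗ₜ ap)) := by
  ext bx cx
  simp only [LinearMap.comp_apply, mk_apply, LinearMap.flip_apply, LinearEquiv.coe_coe,
    assoc_symm_tmul, map_tmul, LinearMap.id_coe, id_eq, AlgebraTensorModule.curry_apply,
    curry_apply, LinearMap.coe_restrictScalars]
  rw [twistMul_tmul]
  generalize R₁ (b1 ⊗ₜ[ℂ] ap) = w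
  induction w using TensorProduct.induction_on with
  | zero => simp
  | add a b ha hb => simp only [map_add, add_tmul, tmul_add]; rw [ha, hb]
  | tmul ax bp => simp [Pimap]

lemma part1maps :
    twistMul mA (twistMul mB mC R₂) (Ttwo R₁ R₃)
        ∘ₗ TensorProduct.map (TensorProduct.assoc ℂ A B C).toLinearMap
            (TensorProduct.assoc ℂ A B C).toLinearMap
      = (TensorProduct.assoc ℂ A B C).toLinearMap
          ∘ₗ twistMul (twistMul mA mB R₁) mC (Tone R₂ R₃) := by
  ext a1 b1 c1 a2 b2 c2
  simp only [LinearMap.comp_apply, map_tmul, LinearMap.id_coe, id_eq, LinearEquiv.coe_coe,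
    assoc_tmul, AlgebraTensorModule.curry_apply, curry_apply,
    LinearMap.coe_restrictScalars]
  rw [twistMul_tmul, twistMul_tmul, ttwo_tmul, tone_tmul]
  simp only [LinearMap.comp_apply, LinearEquiv.coe_coe]
  generalize R₃ (c1 ⊗ₜ[ℂ] a2) = r
  induction r using TensorProduct.induction_on with
  | zero => simp
  | add a b ha hb => simp only [map_add, add_tmul, tmul_add, LinearMap.map_add,
      LinearEquiv.map_add]; rw [ha, hb]
  | tmul ap cp =>
    simp only [assoc_symm_tmul, assoc_tmul, map_tmul, LinearMap.id_coe, id_eq,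
      LinearEquiv.coe_coe]
    have e1 := LinearMap.congr_fun (p1La R₂ mA mB mC a1 b2 c2 cp) (R₁ (b1 ⊗ₜ ap))
    have e2 := LinearMap.congr_fun (p1Lb R₁ mA mB mC a1 b1 c2 ap) (R₂ (cp ⊗ₜ b2))
    simp only [LinearMap.comp_apply, mk_apply, LinearMap.flip_apply,
      LinearEquiv.coe_coe] at e1 e2
    rw [e1, ← e2]


end ABC

lemma mulAssocAlg {A : Type*} [Ring A] [Algebra ℂ A] : MulAssoc' (LinearMap.mul' ℂ A) := by
  unfold MulAssoc'
  ext a b c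
  simp [mul_assoc]

/-- under the hexagon condition, the multiplications of
`A ⊗_{T₂} (B ⊗_{R₂} C)` and `(A ⊗_{R₁} B) ⊗_{T₁} C` agree (under the canonical
associator), so the iterated twisted tensor product `A ⊗_{R₁} B ⊗_{R₂} C` is well
defined, and it is associative. -/
theorem statement12 {A B C : Type*} [Ring A] [Algebra ℂ A] [Ring B] [Algebra ℂ B]
    [Ring C] [Algebra ℂ C]
    (R₁ : B ⊗[ℂ] A →ₗ[ℂ] A ⊗[ℂ] B) (R₂ : C ⊗[ℂ] B →ₗ[ℂ] B ⊗[ℂ] C)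
    (R₃ : C ⊗[ℂ] A →ₗ[ℂ] A ⊗[ℂ] C)
    (h11 : TwistCond1 (LinearMap.mul' ℂ A) R₁) (h12 : TwistCond2 (LinearMap.mul' ℂ B) R₁)
    (h21 : TwistCond1 (LinearMap.mul' ℂ B) R₂) (h22 : TwistCond2 (LinearMap.mul' ℂ C) R₂)
    (h31 : TwistCond1 (LinearMap.mul' ℂ A) R₃) (h32 : TwistCond2 (LinearMap.mul' ℂ C) R₃)
    (hhex : Hexagon R₁ R₂ R₃) :
    (∀ x y : (A ⊗[ℂ] B) ⊗[ℂ] C,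
      twistMul (LinearMap.mul' ℂ A) (twistMul (LinearMap.mul' ℂ B) (LinearMap.mul' ℂ C) R₂)
          (Ttwo R₁ R₃)
          (((TensorProduct.assoc ℂ A B C) x) ⊗ₜ[ℂ] ((TensorProduct.assoc ℂ A B C) y))
        = (TensorProduct.assoc ℂ A B C)
            (twistMul (twistMul (LinearMap.mul' ℂ A) (LinearMap.mul' ℂ B) R₁)
              (LinearMap.mul' ℂ C) (Tone R₂ R₃) (x ⊗ₜ[ℂ] y))) ∧
    (∀ x y z : (A ⊗[ℂ] B) ⊗[ℂ] C,
      twistMul (twistMul (LinearMap.mul' ℂ A) (LinearMap.mul' ℂ B) R₁)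
          (LinearMap.mul' ℂ C) (Tone R₂ R₃)
          ((twistMul (twistMul (LinearMap.mul' ℂ A) (LinearMap.mul' ℂ B) R₁)
              (LinearMap.mul' ℂ C) (Tone R₂ R₃) (x ⊗ₜ[ℂ] y)) ⊗ₜ[ℂ] z)
        = twistMul (twistMul (LinearMap.mul' ℂ A) (LinearMap.mul' ℂ B) R₁)
            (LinearMap.mul' ℂ C) (Tone R₂ R₃)
            (x ⊗ₜ[ℂ] (twistMul (twistMul (LinearMap.mul' ℂ A) (LinearMap.mul' ℂ B) R₁)
                (LinearMap.mul' ℂ C) (Tone R₂ R₃) (y ⊗ₜ[ℂ] z)))) := by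
  constructor
  · intro x y
    have := LinearMap.congr_fun
      (part1maps R₁ R₂ R₃ (LinearMap.mul' ℂ A) (LinearMap.mul' ℂ B) (LinearMap.mul' ℂ C))
      (x ⊗ₜ y)
    simpa using this
  · intro x y z
    have hAB : MulAssoc' (twistMul (LinearMap.mul' ℂ A) (LinearMap.mul' ℂ B) R₁) :=
      twistMul_assoc _ _ _ mulAssocAlg mulAssocAlg h11 h12
    have hbig := twistMul_assoc _ _ _ hAB mulAssocAlg
      (cond1_Tone R₁ R₂ R₃ _ _ h31 h21 hhex)
      (cond2_Tone R₂ R₃ _ h22 h32)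
    unfold MulAssoc' at hbig
    have := LinearMap.congr_fun hbig ((x ⊗ₜ y) ⊗ₜ z)
    simpa using this
end
end

section
/- The twisting maps R₀₁, R₁₂ and the flip R₀₂ : ℂH ⊗ ℂH → ℂH ⊗ ℂH satisfy the hexagon equation (id⊗R₁₂)∘(R₀₂⊗id)∘(id⊗R₀₁) = (R₀₁⊗id)∘(id⊗R₀₂)∘(R₁₂⊗id); explicitly, both sides send h₂ ⊗ δ_g ⊗ h₁ to h₁ ⊗ δ_{h₁⁻¹gh₂⁻¹} ⊗ h₂. -/
open scoped BigOperators

noncomputable section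

variable {G : Type*} [Group G] [Fintype G] [DecidableEq G]

/-- The twisting map `R₀₁ : Ĝ ⊗ ℂH → ℂH ⊗ Ĝ`, `δ_g ⊗ h ↦ h ⊗ δ_{h⁻¹g}`, on
coefficient functions (`Ĝ ⊗ ℂH` is modelled as `G × H → ℂ`, etc.). -/
def R01 (H : Subgroup G) (a : G × H → ℂ) : H × G → ℂ :=
  fun p => a ((p.1 : G) * p.2, p.1)

/-- The twisting map `R₁₂ : ℂH ⊗ Ĝ → Ĝ ⊗ ℂH`, `h ⊗ δ_g ↦ δ_{gh⁻¹} ⊗ h`. -/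
def R12 (H : Subgroup G) (a : H × G → ℂ) : G × H → ℂ :=
  fun p => a (p.2, p.1 * (p.2 : G))

/-- Basis element `h ⊗ δ_g ⊗ f` of `ℂH ⊗ Ĝ ⊗ ℂH` (coefficient-function model). -/
def bas3 (H : Subgroup G) (h : H) (g : G) (f : H) : H × G × H → ℂ :=
  fun p => if p = (h, g, f) then 1 else 0

/-- `id_{A₂} ⊗ R₀₁ : ℂH⊗(Ĝ⊗ℂH) → ℂH⊗(ℂH⊗Ĝ)` (here `A₂ = ℂH` is the leftmost factor,
acting on the coefficient model `H × G × H → ℂ`). -/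
def hexL1 (H : Subgroup G) (a : H × G × H → ℂ) : H × H × G → ℂ :=
  fun p => a (p.1, (p.2.1 : G) * p.2.2, p.2.1)

/-- `R₀₂ ⊗ id : ℂH⊗ℂH⊗Ĝ → ℂH⊗ℂH⊗Ĝ`, the flip of the two `ℂH` factors. -/
def hexL2 (H : Subgroup G) (a : H × H × G → ℂ) : H × H × G → ℂ :=
  fun p => a (p.2.1, p.1, p.2.2)

/-- `id_{A₀} ⊗ R₁₂ : ℂH⊗(ℂH⊗Ĝ) → ℂH⊗(Ĝ⊗ℂH)`. -/
def hexL3 (H : Subgroup G) (a : H × H × G → ℂ) : H × G × H → ℂ :=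
  fun p => a (p.1, p.2.2, p.2.1 * (p.2.2 : G))

/-- `R₁₂ ⊗ id_{A₀} : (ℂH⊗Ĝ)⊗ℂH → (Ĝ⊗ℂH)⊗ℂH`. -/
def hexR1 (H : Subgroup G) (a : H × G × H → ℂ) : G × H × H → ℂ :=
  fun p => a (p.2.1, p.1 * (p.2.1 : G), p.2.2)

/-- `id_Ĝ ⊗ R₀₂ : Ĝ⊗(ℂH⊗ℂH) → Ĝ⊗(ℂH⊗ℂH)`, flipping the two `ℂH` factors. -/
def hexR2 (H : Subgroup G) (a : G × H × H → ℂ) : G × H × H → ℂ :=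
  fun p => a (p.1, p.2.2, p.2.1)

/-- `R₀₁ ⊗ id_{A₂} : (Ĝ⊗ℂH)⊗ℂH → (ℂH⊗Ĝ)⊗ℂH`. -/
def hexR3 (H : Subgroup G) (a : G × H × H → ℂ) : H × G × H → ℂ :=
  fun p => a ((p.1 : G) * p.2.1, p.1, p.2.2)

/-! Both sides of the hexagon are precomposition with the permutation
`(h₁, g, h₂) ↦ (h₂, h₁ g h₂, h₁)` of `H × G × H`, so they agree; the value on a basis
element is the point mass at the preimage `(h₁, h₁⁻¹ g h₂⁻¹, h₂)` of `(h₂, g, h₁)`. -/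

section Hexagon

variable {G : Type*} [Group G] (H : Subgroup G)

def hexagonEquiv : H × G × H ≃ H × G × H where
  toFun p := (p.2.2, p.1 * p.2.1 * p.2.2, p.1)
  invFun p := (p.2.2, (p.2.2 : G)⁻¹ * p.2.1 * (p.1 : G)⁻¹, p.1)
  left_inv p := by simp [mul_assoc]
  right_inv p := by simp [mul_assoc]

theorem hexagonEquiv_symm_apply (h₁ h₂ : H) (g : G) :
    (hexagonEquiv H).symm (h₂, g, h₁) = (h₁, (h₁ : G)⁻¹ * g * (h₂ : G)⁻¹, h₂) :=
  rfl

theorem hexL_eq_comp_hexagonEquiv (a : H × G × H → ℂ) :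
    hexL3 H (hexL2 H (hexL1 H a)) = a ∘ hexagonEquiv H := by
  funext p
  simp [hexL1, hexL2, hexL3, hexagonEquiv, mul_assoc]

theorem hexR_eq_comp_hexagonEquiv (a : H × G × H → ℂ) :
    hexR3 H (hexR2 H (hexR1 H a)) = a ∘ hexagonEquiv H := by
  funext p
  simp [hexR1, hexR2, hexR3, hexagonEquiv, mul_assoc]

theorem bas3_eq_single [DecidableEq G] (h : H) (g : G) (f : H) :
    bas3 H h g f = Pi.single (h, g, f) 1 := by
  funext p
  simp [bas3, Pi.single_apply]

end Hexagon

/-- the twisting maps `R₀₁, R₁₂` and the flip `R₀₂` satisfy the hexagon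
equation `(id⊗R₁₂)∘(R₀₂⊗id)∘(id⊗R₀₁) = (R₀₁⊗id)∘(id⊗R₀₂)∘(R₁₂⊗id)`; explicitly, both
sides send the basis element `h₂ ⊗ δ_g ⊗ h₁` to `h₁ ⊗ δ_{h₁⁻¹gh₂⁻¹} ⊗ h₂`. -/
theorem statement14 (H : Subgroup G) :
    (∀ a : H × G × H → ℂ,
      hexL3 H (hexL2 H (hexL1 H a)) = hexR3 H (hexR2 H (hexR1 H a))) ∧
    (∀ (h₁ h₂ : H) (g : G),
      hexL3 H (hexL2 H (hexL1 H (bas3 H h₂ g h₁)))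
        = bas3 H h₁ ((h₁ : G)⁻¹ * g * (h₂ : G)⁻¹) h₂) := by
  constructor
  · intro a
    rw [hexL_eq_comp_hexagonEquiv, hexR_eq_comp_hexagonEquiv]
  · intro h₁ h₂ g
    rw [hexL_eq_comp_hexagonEquiv, bas3_eq_single, bas3_eq_single, Pi.single_comp_equiv,
      hexagonEquiv_symm_apply]
end
end

section
/- In the iterated twisted tensor product ℂH ⊗_{R₀₁} Ĝ ⊗_{R₁₂} ℂH, the multiplication on basis elements is given by (h₁ ⊗ δ_{g₁} ⊗ f₁)(h₂ ⊗ δ_{g₂} ⊗ f₂) = δ_{h₂⁻¹g₁, g₂f₁⁻¹} · (h₁h₂ ⊗ δ_{h₂⁻¹g₁} ⊗ f₁f₂), and this multiplication is associative. -/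
/-!
On basis vectors the double sum defining `tmul3` has a single nonzero term, at the summation
indices `(h₂, f₁)`; solving its four defining equations for the output triple gives the formula.
For associativity, both iterated products expand to fourfold sums of products `a * b * c`, and
the substitution `(h₃, f₂, h₂, f₁) ↦ (h₂ h₃, f₁, h₃, f₁⁻¹ f₂)` of the summation indices matches
them term by term.
-/

open scoped BigOperators

noncomputable section

variable {G : Type*} [Group G] [Fintype G] [DecidableEq G]

/-- The multiplication of the iterated twisted tensor product `ℂH ⊗_{R₀₁} Ĝ ⊗_{R₁₂} ℂH`,
the bilinear extension of
`(h₁⊗δ_{g₁}⊗f₁)(h₂⊗δ_{g₂}⊗f₂) = h₁h₂ ⊗ δ_{h₂⁻¹g₁}δ_{g₂f₁⁻¹} ⊗ f₁f₂`. -/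
def tmul3 (H : Subgroup G) [Fintype H] (a b : H × G × H → ℂ) : H × G × H → ℂ :=
  fun p => ∑ h₂ : H, ∑ f₁ : H,
    a (p.1 * h₂⁻¹, (h₂ : G) * p.2.1, f₁) * b (h₂, p.2.1 * (f₁ : G), f₁⁻¹ * p.2.2)

def tmul3ReassocEquiv (K : Type*) [Group K] : K × K × K × K ≃ K × K × K × K where
  toFun x := (x.2.2.1 * x.1, x.2.2.2, x.1, x.2.2.2⁻¹ * x.2.1)
  invFun x := (x.2.2.1, x.2.1 * x.2.2.2, x.1 * x.2.2.1⁻¹, x.2.1)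
  left_inv x := by simp
  right_inv x := by simp

section

variable (H : Subgroup G) [Fintype H]

omit [Fintype G] in
theorem tmul3_bas3_bas3_apply (h₁ h₂ f₁ f₂ : H) (g₁ g₂ : G) (p : H × G × H) :
    tmul3 H (bas3 H h₁ g₁ f₁) (bas3 H h₂ g₂ f₂) p =
      bas3 H h₁ g₁ f₁ (p.1 * h₂⁻¹, h₂ * p.2.1, f₁) *
        bas3 H h₂ g₂ f₂ (h₂, p.2.1 * f₁, f₁⁻¹ * p.2.2) := by
  rw [tmul3, Fintype.sum_eq_single h₂, Fintype.sum_eq_single f₁]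
  · intro l hl
    simp [bas3, hl]
  · intro k hk
    simp [bas3, hk]

omit [Fintype G] in
theorem tmul3_bas3_bas3 (h₁ h₂ f₁ f₂ : H) (g₁ g₂ : G) :
    tmul3 H (bas3 H h₁ g₁ f₁) (bas3 H h₂ g₂ f₂)
      = if (h₂ : G)⁻¹ * g₁ = g₂ * (f₁ : G)⁻¹
          then bas3 H (h₁ * h₂) ((h₂ : G)⁻¹ * g₁) (f₁ * f₂) else 0 := by
  funext ⟨x, g, y⟩
  have hx : x * h₂⁻¹ = h₁ ↔ x = h₁ * h₂ := mul_inv_eq_iff_eq_mul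
  have hg₁ : (h₂ : G) * g = g₁ ↔ g = (h₂ : G)⁻¹ * g₁ := eq_inv_mul_iff_mul_eq.symm
  have hg₂ : g * f₁ = g₂ ↔ g = g₂ * (f₁ : G)⁻¹ := eq_mul_inv_iff_mul_eq.symm
  have hy : f₁⁻¹ * y = f₂ ↔ y = f₁ * f₂ := inv_mul_eq_iff_eq_mul
  simp only [tmul3_bas3_bas3_apply, bas3, Prod.mk.injEq, hx, hg₁, hg₂, hy, and_true, true_and,
    ite_zero_mul_ite_zero, mul_one, ite_apply, Pi.zero_apply, ← ite_and]
  congr 1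
  exact propext ⟨fun ⟨⟨hx, hg⟩, hg', hy⟩ => ⟨hg.symm.trans hg', hx, hg, hy⟩,
    fun ⟨hc, hx, hg, hy⟩ => ⟨⟨hx, hg⟩, hg.trans hc, hy⟩⟩

omit [Fintype G] [DecidableEq G] in
theorem tmul3_assoc (a b c : H × G × H → ℂ) :
    tmul3 H (tmul3 H a b) c = tmul3 H a (tmul3 H b c) := by
  funext ⟨x, g, y⟩
  simp only [tmul3, Finset.sum_mul, Finset.mul_sum, ← Fintype.sum_prod_type']
  refine Fintype.sum_equiv (tmul3ReassocEquiv H) _ _ fun ⟨h₃, f₂, h₂, f₁⟩ => ?_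
  simp [tmul3ReassocEquiv, mul_assoc]

end

/-- in `ℂH ⊗_{R₀₁} Ĝ ⊗_{R₁₂} ℂH`, on basis elements
`(h₁⊗δ_{g₁}⊗f₁)(h₂⊗δ_{g₂}⊗f₂) = δ_{h₂⁻¹g₁,g₂f₁⁻¹} (h₁h₂ ⊗ δ_{h₂⁻¹g₁} ⊗ f₁f₂)`, and this
multiplication is associative. -/
theorem statement15 (H : Subgroup G) [Fintype H] :
    (∀ (h₁ h₂ f₁ f₂ : H) (g₁ g₂ : G),
      tmul3 H (bas3 H h₁ g₁ f₁) (bas3 H h₂ g₂ f₂)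
        = if (h₂ : G)⁻¹ * g₁ = g₂ * (f₁ : G)⁻¹
            then bas3 H (h₁ * h₂) ((h₂ : G)⁻¹ * g₁) (f₁ * f₂) else 0) ∧
    (∀ a b c : H × G × H → ℂ, tmul3 H (tmul3 H a b) c = tmul3 H a (tmul3 H b c)) :=
  ⟨tmul3_bas3_bas3 H, tmul3_assoc H⟩
end
end

section
/- The map θ defined on basis elements of ℂH ⊗_{R₀₁} Ĝ ⊗_{R₁₂} ℂH by θ(h₁ ⊗ δ_g ⊗ h₂) = h₁⁻¹ ⊗ δ_{h₁gh₂} ⊗ h₂⁻¹ satisfies θ(θ(x)) = x and θ(xy) = θ(y)θ(x) for all x, y; hence x* := θ(x) (extended conjugate-linearly) makes ℂH ⊗_{R₀₁} Ĝ ⊗_{R₁₂} ℂH a *-algebra. -/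
open scoped BigOperators

noncomputable section

variable {G : Type*} [Group G] [Fintype G] [DecidableEq G]

/-- The map `θ(h₁ ⊗ δ_g ⊗ h₂) = h₁⁻¹ ⊗ δ_{h₁gh₂} ⊗ h₂⁻¹`, extended linearly. -/
def theta (H : Subgroup G) (a : H × G × H → ℂ) : H × G × H → ℂ :=
  fun p => a (p.1⁻¹, (p.1 : G) * p.2.1 * (p.2.2 : G), p.2.2⁻¹)

/-- The star operation: `θ` extended conjugate-linearly. -/
def star3 (H : Subgroup G) (a : H × G × H → ℂ) : H × G × H → ℂ :=
  fun p => (starRingEnd ℂ) (a (p.1⁻¹, (p.1 : G) * p.2.1 * (p.2.2 : G), p.2.2⁻¹))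

/-!
On coefficient functions, `θ` is precomposition with the involution
`(h₁, g, h₂) ↦ (h₁⁻¹, h₁ g h₂, h₂⁻¹)` of `H × G × H`, so `θ ∘ θ = id`. Anti-multiplicativity
is a change of the two summation variables in the convolution formula `tmul3`:
`h ↦ h * h₁` and `f ↦ h₂ * f`. The star is `θ` followed by pointwise complex conjugation,
which commutes with `tmul3` because the structure constants of the product are `0` and `1`.
-/

section StarStructure

omit [Fintype G] [DecidableEq G]

variable (H : Subgroup G)

theorem theta_involutive : Function.Involutive (theta H) := by
  intro a
  funext p
  simp [theta, mul_assoc]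

theorem theta_tmul3 [Fintype H] (a b : H × G × H → ℂ) :
    theta H (tmul3 H a b) = tmul3 H (theta H b) (theta H a) := by
  funext p
  simp only [theta, tmul3]
  refine Fintype.sum_equiv (Equiv.mulRight p.1) _ _ fun h => ?_
  refine Fintype.sum_equiv (Equiv.mulLeft p.2.2) _ _ fun f => ?_
  simp only [Equiv.coe_mulRight, Equiv.coe_mulLeft]
  rw [mul_comm]
  congr 2 <;> push_cast <;> group

theorem star3_eq_conj_theta (a : H × G × H → ℂ) :
    star3 H a = fun p => starRingEnd ℂ (theta H a p) := rfl

theorem conj_tmul3 [Fintype H] (a b : H × G × H → ℂ) :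
    (fun p => starRingEnd ℂ (tmul3 H a b p)) =
      tmul3 H (fun p => starRingEnd ℂ (a p)) (fun p => starRingEnd ℂ (b p)) := by
  funext p
  simp [tmul3, map_sum]

theorem star3_involutive : Function.Involutive (star3 H) := by
  intro a
  funext p
  simp [star3, mul_assoc]

theorem star3_tmul3 [Fintype H] (a b : H × G × H → ℂ) :
    star3 H (tmul3 H a b) = tmul3 H (star3 H b) (star3 H a) := by
  rw [star3_eq_conj_theta, theta_tmul3, conj_tmul3]
  rfl

theorem star3_add (a b : H × G × H → ℂ) : star3 H (a + b) = star3 H a + star3 H b := by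
  funext p
  simp [star3]

theorem star3_smul (c : ℂ) (a : H × G × H → ℂ) :
    star3 H (c • a) = starRingEnd ℂ c • star3 H a := by
  funext p
  simp [star3]

end StarStructure

/-- `θ(h₁⊗δ_g⊗h₂) = h₁⁻¹⊗δ_{h₁gh₂}⊗h₂⁻¹` satisfies `θ∘θ = id` and
`θ(xy) = θ(y)θ(x)`; hence its conjugate-linear extension `x* = θ(x)` makes
`ℂH ⊗_{R₀₁} Ĝ ⊗_{R₁₂} ℂH` a *-algebra. -/
theorem statement16 (H : Subgroup G) [Fintype H] :
    (∀ a : H × G × H → ℂ, theta H (theta H a) = a) ∧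
    (∀ a b : H × G × H → ℂ, theta H (tmul3 H a b) = tmul3 H (theta H b) (theta H a)) ∧
    (∀ a : H × G × H → ℂ, star3 H (star3 H a) = a) ∧
    (∀ a b : H × G × H → ℂ, star3 H (tmul3 H a b) = tmul3 H (star3 H b) (star3 H a)) ∧
    (∀ a b : H × G × H → ℂ, star3 H (a + b) = star3 H a + star3 H b) ∧
    (∀ (c : ℂ) (a : H × G × H → ℂ), star3 H (c • a) = (starRingEnd ℂ c) • star3 H a) :=
  ⟨theta_involutive H, theta_tmul3 H, star3_involutive H, star3_tmul3 H, star3_add H,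
    star3_smul H⟩
end
end

section
/- The map π on ℂH ⊗_{R₀₁} Ĝ ⊗_{R₁₂} ℂH defined on generators by (π(h^{(0)})ψ)(g₀,g₂) = ψ(g₀h^{(0)}, g₂), (π(h^{(2)})ψ)(g₀,g₂) = ψ(g₀, g₂h^{(2)}), and (π(δ_g)ψ)(g₀,g₂) = δ_g(g₀⁻¹g₂)ψ(g₀,g₂), acting on the Hilbert space L²(G) ⊗ L²(G), is a faithful *-representation; hence ℂH ⊗_{R₀₁} Ĝ ⊗_{R₁₂} ℂH is a finite-dimensional C*-algebra. -/
open scoped BigOperators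

noncomputable section

variable {G : Type*} [Group G] [Fintype G] [DecidableEq G]

/-- The unit `e ⊗ (∑_g δ_g) ⊗ e` of `ℂH ⊗_{R₀₁} Ĝ ⊗_{R₁₂} ℂH`. -/
def one3 (H : Subgroup G) : H × G × H → ℂ :=
  fun p => if p.1 = 1 ∧ p.2.2 = 1 then 1 else 0

/-- The representation `π` on the Hilbert space `L²(G) ⊗ L²(G)` (functions `G × G → ℂ`):
on generators, `(π(h⁽⁰⁾)ψ)(g₀,g₂) = ψ(g₀h,g₂)`, `(π(h⁽²⁾)ψ)(g₀,g₂) = ψ(g₀,g₂h)`,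
`(π(δ_g)ψ)(g₀,g₂) = δ_g(g₀⁻¹g₂)ψ(g₀,g₂)`. -/
def pi3 (H : Subgroup G) [Fintype H] (a : H × G × H → ℂ) (ψ : G × G → ℂ) : G × G → ℂ :=
  fun q => ∑ h : H, ∑ f : H,
    a (h, (h : G)⁻¹ * q.1⁻¹ * q.2, f) * ψ (q.1 * (h : G), q.2 * (f : G))

/-! Both sides of every identity are finite sums over right translates
`(g₀, g₂) ↦ (g₀h, g₂f)`, `h, f ∈ H`, so multiplicativity and the *-property are changes of
variables: in `π(ab)` the inner pair `(h₂, f₁)` of the product is absorbed into the translation,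
and the adjoint is computed by the involution `((g₀, g₂), h, f) ↦ ((g₀h, g₂f), h⁻¹, f⁻¹)`.
Faithfulness holds because `π(a)` maps the point mass at `(g₀h, g₂f)` to a function whose value
at `(g₀, g₂)` is the coefficient `a(h, h⁻¹g₀⁻¹g₂, f)`, and every coefficient arises this way. -/

section

variable (H : Subgroup G) [Fintype H]

omit [Fintype G] [DecidableEq G] in
lemma pi3_add_left (a b : H × G × H → ℂ) (ψ : G × G → ℂ) :
    pi3 H (a + b) ψ = pi3 H a ψ + pi3 H b ψ := by
  funext q
  simp only [pi3, Pi.add_apply, add_mul, Finset.sum_add_distrib]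

omit [Fintype G] [DecidableEq G] in
lemma pi3_smul_left (c : ℂ) (a : H × G × H → ℂ) (ψ : G × G → ℂ) :
    pi3 H (c • a) ψ = c • pi3 H a ψ := by
  funext q
  simp only [pi3, Pi.smul_apply, smul_eq_mul, Finset.mul_sum, mul_assoc]

omit [Fintype G] [DecidableEq G] in
lemma pi3_add_right (a : H × G × H → ℂ) (ψ ψ' : G × G → ℂ) :
    pi3 H a (ψ + ψ') = pi3 H a ψ + pi3 H a ψ' := by
  funext q
  simp only [pi3, Pi.add_apply, mul_add, Finset.sum_add_distrib]

omit [Fintype G] [DecidableEq G] in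
lemma pi3_smul_right (a : H × G × H → ℂ) (c : ℂ) (ψ : G × G → ℂ) :
    pi3 H a (c • ψ) = c • pi3 H a ψ := by
  funext q
  simp only [pi3, Pi.smul_apply, smul_eq_mul, Finset.mul_sum, mul_left_comm]

omit [Fintype G] in
lemma pi3_one (ψ : G × G → ℂ) : pi3 H (one3 H) ψ = ψ := by
  funext q
  simp [pi3, one3, ite_and, Finset.sum_ite_eq']

omit [Fintype G] [DecidableEq G] in
lemma pi3_mul (a b : H × G × H → ℂ) (ψ : G × G → ℂ) :
    pi3 H (tmul3 H a b) ψ = pi3 H a (pi3 H b ψ) := by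
  funext q
  -- `π(a)π(b)` sums over `(h, f, h', f')`, `π(ab)` over `(hh', ff', h', f)`.
  let e : H × H × H × H ≃ H × H × H × H :=
    { toFun := fun ⟨h, f, h', f'⟩ => (h * h', f * f', h', f)
      invFun := fun ⟨h, f, h', f'⟩ => (h * h'⁻¹, f', h', f'⁻¹ * f)
      left_inv := fun _ => by simp
      right_inv := fun _ => by simp }
  simp only [pi3, tmul3, Finset.sum_mul, Finset.mul_sum, ← Fintype.sum_prod_type']
  refine (Fintype.sum_equiv e _ _ fun p => ?_).symm
  simp [e, mul_assoc]

omit [DecidableEq G] in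
lemma pi3_star (a : H × G × H → ℂ) (ψ φ : G × G → ℂ) :
    ∑ q : G × G, pi3 H a ψ q * (starRingEnd ℂ) (φ q)
      = ∑ q : G × G, ψ q * (starRingEnd ℂ) (pi3 H (star3 H a) φ q) := by
  let σ : (G × G) × H × H → (G × G) × H × H :=
    fun ⟨⟨x, y⟩, h, f⟩ => ((x * h, y * f), h⁻¹, f⁻¹)
  have hσ : Function.Involutive σ := fun _ => by simp [σ]
  simp only [pi3, star3, Finset.sum_mul, Finset.mul_sum, map_sum, ← Fintype.sum_prod_type']
  refine Fintype.sum_equiv hσ.toPerm _ _ fun p => ?_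
  simp [σ, mul_assoc, mul_left_comm]

omit [Fintype G] in
lemma pi3_single_apply (a : H × G × H → ℂ) (x y : G) (h₀ f₀ : H) :
    pi3 H a (Pi.single (x * h₀, y * f₀) 1) (x, y) = a (h₀, (h₀ : G)⁻¹ * x⁻¹ * y, f₀) := by
  rw [pi3, Finset.sum_eq_single h₀ (fun h _ hh => by simp [hh]) (by simp),
    Finset.sum_eq_single f₀ (fun f _ hf => by simp [hf]) (by simp)]
  simp

omit [Fintype G] in
lemma pi3_injective (a b : H × G × H → ℂ) (hab : ∀ ψ : G × G → ℂ, pi3 H a ψ = pi3 H b ψ) :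
    a = b := by
  funext ⟨h, g, f⟩
  have hcoeff := congrFun (hab (Pi.single ((1 : G) * h, h * g * f) 1)) (1, h * g)
  rw [pi3_single_apply, pi3_single_apply] at hcoeff
  simpa using hcoeff

end

/-- `π` is a faithful *-representation of `ℂH ⊗_{R₀₁} Ĝ ⊗_{R₁₂} ℂH` on
`L²(G) ⊗ L²(G)` (with inner product `⟨φ,ψ⟩ = (1/|G|)∑ φ conj ψ`); in particular the
algebra is a finite-dimensional C*-algebra. -/
theorem statement17 (H : Subgroup G) [Fintype H] :
    (∀ ψ : G × G → ℂ, pi3 H (one3 H) ψ = ψ) ∧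
    (∀ (a b : H × G × H → ℂ) (ψ : G × G → ℂ),
      pi3 H (tmul3 H a b) ψ = pi3 H a (pi3 H b ψ)) ∧
    (∀ (a b : H × G × H → ℂ) (ψ : G × G → ℂ),
      pi3 H (a + b) ψ = pi3 H a ψ + pi3 H b ψ) ∧
    (∀ (c : ℂ) (a : H × G × H → ℂ) (ψ : G × G → ℂ), pi3 H (c • a) ψ = c • pi3 H a ψ) ∧
    (∀ (a : H × G × H → ℂ) (ψ ψ' : G × G → ℂ), pi3 H a (ψ + ψ') = pi3 H a ψ + pi3 H a ψ') ∧
    (∀ (a : H × G × H → ℂ) (c : ℂ) (ψ : G × G → ℂ), pi3 H a (c • ψ) = c • pi3 H a ψ) ∧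
    (∀ a b : H × G × H → ℂ, (∀ ψ : G × G → ℂ, pi3 H a ψ = pi3 H b ψ) → a = b) ∧
    (∀ (a : H × G × H → ℂ) (ψ φ : G × G → ℂ),
      (Fintype.card G : ℂ)⁻¹ * ∑ q : G × G, pi3 H a ψ q * (starRingEnd ℂ) (φ q)
        = (Fintype.card G : ℂ)⁻¹ *
            ∑ q : G × G, ψ q * (starRingEnd ℂ) (pi3 H (star3 H a) φ q)) ∧
    FiniteDimensional ℂ (H × G × H → ℂ) :=
  ⟨pi3_one H, pi3_mul H, pi3_add_left H, pi3_smul_left H, pi3_add_right H, pi3_smul_right H,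
    pi3_injective H, fun a ψ φ => by rw [pi3_star], inferInstance⟩
end
end

section
/- For any i < j < k with j − i ≥ 2 and the twisting maps R_{i,k}, R_{j,k} both equal to flips, the maps R_{i,j}, R_{j,k}, R_{i,k} satisfy the hexagon equation; more generally, if among three twisting maps R₁ : B⊗A→A⊗B, R₂ : C⊗B→B⊗C, R₃ : C⊗A→A⊗C any two are usual flips, then the three are compatible (satisfy the hexagon equation). -/
open TensorProduct

noncomputable section

/-!
When two of the three maps are flips, each side of the hexagon applied to `c ⊗ (b ⊗ a)` is the
third map's output `z` moved past the remaining pure factor by flips and associators. The two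
ways of doing this agree: for the symmetric braiding of modules this is checked on pure tensors
and extends to arbitrary `z` by additivity.
-/

namespace TensorProduct

variable {R X Y Z : Type*} [CommSemiring R] [AddCommMonoid X] [Module R X]
  [AddCommMonoid Y] [Module R Y] [AddCommMonoid Z] [Module R Z]

theorem comm_tensor_right_tmul (z : X ⊗[R] Y) (c : Z) :
    map LinearMap.id (TensorProduct.comm R Z Y)
        (TensorProduct.assoc R X Z Y (map (TensorProduct.comm R Z X) LinearMap.id
          ((TensorProduct.assoc R Z X Y).symm (c ⊗ₜ z)))) =
      TensorProduct.assoc R X Y Z (z ⊗ₜ c) := by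
  induction z using TensorProduct.induction_on with
  | zero => simp
  | tmul x y => rfl
  | add z z' hz hz' => simp only [tmul_add, add_tmul, map_add, hz, hz']

theorem comm_tensor_left_tmul (z : Y ⊗[R] Z) (x : X) :
    TensorProduct.assoc R X Y Z (map (TensorProduct.comm R Y X) LinearMap.id
        ((TensorProduct.assoc R Y X Z).symm (map LinearMap.id (TensorProduct.comm R Z X)
          (TensorProduct.assoc R Y Z X (z ⊗ₜ x))))) =
      x ⊗ₜ z := by
  induction z using TensorProduct.induction_on with
  | zero => simp
  | tmul y c => rfl
  | add z z' hz hz' => simp only [tmul_add, add_tmul, map_add, hz, hz']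

theorem map_id_comm_assoc_tmul (z : X ⊗[R] Z) (y : Y) :
    map LinearMap.id (TensorProduct.comm R Z Y) (TensorProduct.assoc R X Z Y (z ⊗ₜ y)) =
      TensorProduct.assoc R X Y Z (map (TensorProduct.comm R Y X) LinearMap.id
        ((TensorProduct.assoc R Y X Z).symm (y ⊗ₜ z))) := by
  induction z using TensorProduct.induction_on with
  | zero => simp
  | tmul x c => rfl
  | add z z' hz hz' => simp only [tmul_add, add_tmul, map_add, hz, hz']

end TensorProduct

section

variable {A B C : Type*} [AddCommGroup A] [Module ℂ A] [AddCommGroup B] [Module ℂ B]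
  [AddCommGroup C] [Module ℂ C]

theorem hexagon_comm₂_comm₃ (R₁ : B ⊗[ℂ] A →ₗ[ℂ] A ⊗[ℂ] B) :
    Hexagon R₁ (TensorProduct.comm ℂ C B).toLinearMap (TensorProduct.comm ℂ C A).toLinearMap := by
  ext c b a
  simp [TensorProduct.comm_tensor_right_tmul]

theorem hexagon_comm₁_comm₃ (R₂ : C ⊗[ℂ] B →ₗ[ℂ] B ⊗[ℂ] C) :
    Hexagon (TensorProduct.comm ℂ B A).toLinearMap R₂ (TensorProduct.comm ℂ C A).toLinearMap := by
  ext c b a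
  simp [TensorProduct.comm_tensor_left_tmul]

theorem hexagon_comm₁_comm₂ (R₃ : C ⊗[ℂ] A →ₗ[ℂ] A ⊗[ℂ] C) :
    Hexagon (TensorProduct.comm ℂ B A).toLinearMap (TensorProduct.comm ℂ C B).toLinearMap R₃ := by
  ext c b a
  simp [TensorProduct.map_id_comm_assoc_tmul]

end

theorem statement18_general {A B C : Type*} [Ring A] [Algebra ℂ A] [Ring B] [Algebra ℂ B]
    [Ring C] [Algebra ℂ C]
    (R₁ : B ⊗[ℂ] A →ₗ[ℂ] A ⊗[ℂ] B) (R₂ : C ⊗[ℂ] B →ₗ[ℂ] B ⊗[ℂ] C)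
    (R₃ : C ⊗[ℂ] A →ₗ[ℂ] A ⊗[ℂ] C) :
    ((R₂ = (TensorProduct.comm ℂ C B).toLinearMap ∧
        R₃ = (TensorProduct.comm ℂ C A).toLinearMap) → Hexagon R₁ R₂ R₃) ∧
    ((R₁ = (TensorProduct.comm ℂ B A).toLinearMap ∧
        R₃ = (TensorProduct.comm ℂ C A).toLinearMap) → Hexagon R₁ R₂ R₃) ∧
    ((R₁ = (TensorProduct.comm ℂ B A).toLinearMap ∧
        R₂ = (TensorProduct.comm ℂ C B).toLinearMap) → Hexagon R₁ R₂ R₃) := by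
  refine ⟨?_, ?_, ?_⟩ <;> rintro ⟨rfl, rfl⟩
  · exact hexagon_comm₂_comm₃ R₁
  · exact hexagon_comm₁_comm₃ R₂
  · exact hexagon_comm₁_comm₂ R₃

/-- among three twisting maps `R₁ : B⊗A→A⊗B`, `R₂ : C⊗B→B⊗C`,
`R₃ : C⊗A→A⊗C`, if any two of them are the usual flips, then the three are compatible,
i.e. they satisfy the hexagon equation. (In particular this applies to the maps
`R_{i,j}, R_{j,k}, R_{i,k}` whenever `j - i ≥ 2`, so that `R_{i,k}` and `R_{j,k}` are
flips.) -/
theorem statement18 {A B C : Type*} [Ring A] [Algebra ℂ A] [Ring B] [Algebra ℂ B]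
    [Ring C] [Algebra ℂ C]
    (R₁ : B ⊗[ℂ] A →ₗ[ℂ] A ⊗[ℂ] B) (R₂ : C ⊗[ℂ] B →ₗ[ℂ] B ⊗[ℂ] C)
    (R₃ : C ⊗[ℂ] A →ₗ[ℂ] A ⊗[ℂ] C)
    (h11 : TwistCond1 (LinearMap.mul' ℂ A) R₁) (h12 : TwistCond2 (LinearMap.mul' ℂ B) R₁)
    (h21 : TwistCond1 (LinearMap.mul' ℂ B) R₂) (h22 : TwistCond2 (LinearMap.mul' ℂ C) R₂)
    (h31 : TwistCond1 (LinearMap.mul' ℂ A) R₃) (h32 : TwistCond2 (LinearMap.mul' ℂ C) R₃) :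
    ((R₂ = (TensorProduct.comm ℂ C B).toLinearMap ∧
        R₃ = (TensorProduct.comm ℂ C A).toLinearMap) → Hexagon R₁ R₂ R₃) ∧
    ((R₁ = (TensorProduct.comm ℂ B A).toLinearMap ∧
        R₃ = (TensorProduct.comm ℂ C A).toLinearMap) → Hexagon R₁ R₂ R₃) ∧
    ((R₁ = (TensorProduct.comm ℂ B A).toLinearMap ∧
        R₂ = (TensorProduct.comm ℂ C B).toLinearMap) → Hexagon R₁ R₂ R₃) :=
  statement18_general R₁ R₂ R₃
end
end
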